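/- arXiv:2009.06667 — 3 statements merged into one kernel-verified Lean document; each statement's English description precedes it below -/
import Mathlib

section
/- Let G be a group and let (V, ρ) be a finite-dimensional complex representation of G that decomposes as an internal direct sum V = ⨁_{r∈R} V_r over a finite index set R, where each V_r is a ρ-invariant subspace, the restriction of ρ to each V_r is irreducible, and the restrictions to distinct V_r are pairwise non-isomorphic. Suppose there exist finite-dimensional complex vector spaces M_in and M_out, fixed linear maps E : V → M_in and D : M_out → V, and for each g ∈ G a linear map S_g : M_in → M_out, such that ρ(g) = D ∘ S_g ∘ E for every g ∈ G. Then (dim M_in) · (dim M_out) ≥ Σ_{r∈R} (dim V_r)². -/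
/-!
Every `ρ g` lies in the image of the linear map `S ↦ D ∘ S ∘ E`, so the span of `ρ(G)` has
dimension at most `dim M_in · dim M_out`. Conversely, since the `V_r` are simple and pairwise
non-isomorphic, Schur's lemma makes every endomorphism of `V` commuting with `ρ(G)` preserve each
`V_r` and act on it by a scalar. Hence every block-diagonal endomorphism commutes with all of
them, and Jacobson's density theorem puts it in the algebra generated by `ρ(G)`, which is the
span of `ρ(G)`. The block-diagonal endomorphisms form a space of dimension `Σ_r (dim V_r)²`.
-/

open Module DirectSum

theorem finrank_span_le_mul_of_forall_eq_comp {K V W M N : Type*} [Field K]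
    [AddCommGroup V] [Module K V] [AddCommGroup W] [Module K W]
    [AddCommGroup M] [Module K M] [FiniteDimensional K M]
    [AddCommGroup N] [Module K N] [FiniteDimensional K N]
    (E : V →ₗ[K] M) (D : N →ₗ[K] W) (s : Set (V →ₗ[K] W))
    (hs : ∀ T ∈ s, ∃ S : M →ₗ[K] N, T = D ∘ₗ S ∘ₗ E) :
    finrank K (Submodule.span K s) ≤ finrank K M * finrank K N := by
  let Φ : (M →ₗ[K] N) →ₗ[K] V →ₗ[K] W := LinearMap.lcomp K W E ∘ₗ LinearMap.llcomp K M N W D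
  have hle : Submodule.span K s ≤ LinearMap.range Φ := Submodule.span_le.mpr fun T hT ↦ by
    obtain ⟨S, rfl⟩ := hs T hT
    exact ⟨S, rfl⟩
  calc finrank K (Submodule.span K s)
      ≤ finrank K (LinearMap.range Φ) := Submodule.finrank_mono hle
    _ ≤ finrank K (M →ₗ[K] N) := LinearMap.finrank_range_le Φ
    _ = finrank K M * finrank K N := finrank_linearMap K K M N

theorem exists_smul_eq_of_commute_end {K A V : Type*} [CommSemiring K] [Ring A] [Algebra K A]
    [AddCommGroup V] [Module K V] [Module A V] [IsScalarTower K A V]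
    [IsSemisimpleModule A V] [Module.Finite K V]
    (T : V →ₗ[K] V) (hT : ∀ (φ : Module.End A V) (v : V), T (φ v) = φ (T v)) :
    ∃ a : A, ∀ v, T v = a • v := by
  obtain ⟨s, hs⟩ := Module.Finite.fg_top (R := K) (M := V)
  let f : Module.End (Module.End A V) V := { toFun := T, map_add' := T.map_add, map_smul' := hT }
  obtain ⟨a, ha⟩ := jacobson_density f s
  exact ⟨a, LinearMap.congr_fun (LinearMap.ext_on hs (g := DistribSMul.toLinearMap K V a) ha)⟩

namespace DirectSum

section BlockDiagonal

variable {K V ι : Type*} [Field K] [AddCommGroup V] [Module K V] [DecidableEq ι]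
  (p : ι → Submodule K V) [Decomposition p]

noncomputable def blockDiagonal : (Π i, Module.End K (p i)) →ₗ[K] Module.End K V where
  toFun f := coeLinearMap p ∘ₗ lmap f ∘ₗ decomposeLinearEquiv p
  map_add' f g := decompose_lhom_ext p fun i ↦ by ext x; simp
  map_smul' c f := decompose_lhom_ext p fun i ↦ by ext x; simp

@[simp]
theorem blockDiagonal_apply_coe (f : Π i, Module.End K (p i)) {i : ι} (x : p i) :
    blockDiagonal p f x = f i x := by
  simp [blockDiagonal]

theorem blockDiagonal_injective : Function.Injective (blockDiagonal p) := fun f g hfg ↦ by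
  ext i x
  simpa using congr($hfg x)

theorem sum_finrank_sq_le_finrank_of_apply_mem [Fintype ι] [FiniteDimensional K V]
    (W : Submodule K (Module.End K V))
    (hW : ∀ T : Module.End K V, (∀ i, ∀ x ∈ p i, T x ∈ p i) → T ∈ W) :
    ∑ i, finrank K (p i) ^ 2 ≤ finrank K W := by
  have hmem (f : Π i, Module.End K (p i)) : blockDiagonal p f ∈ W := hW _ fun i x hx ↦ by
    rw [show x = ((⟨x, hx⟩ : p i) : V) from rfl, blockDiagonal_apply_coe]
    exact SetLike.coe_mem _
  calc ∑ i, finrank K (p i) ^ 2 = finrank K (Π i, Module.End K (p i)) := by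
        simp [finrank_pi_fintype, finrank_linearMap, sq]
    _ ≤ finrank K W := LinearMap.finrank_le_finrank_of_injective
        (f := (blockDiagonal p).codRestrict W hmem)
        fun f g h ↦ blockDiagonal_injective p congr(($h : Module.End K V))

end BlockDiagonal

section Schur

variable {A V ι : Type*} [Ring A] [AddCommGroup V] [Module A V] [DecidableEq ι]
  (P : ι → Submodule A V) [Decomposition P] [∀ i, IsSimpleModule A (P i)]

theorem apply_mem_of_pairwise_isEmpty_linearEquiv
    (hP : Pairwise fun i j ↦ IsEmpty (P i ≃ₗ[A] P j)) (φ : Module.End A V) {i : ι} (x : P i) :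
    φ x ∈ P i := by
  have hcomponent : ∀ j ≠ i, decompose P (φ x) j = 0 := fun j hji ↦ by
    let ψ : P i →ₗ[A] P j :=
      component A ι (P ·) j ∘ₗ (decomposeLinearEquiv P).toLinearMap ∘ₗ φ ∘ₗ (P i).subtype
    obtain hψ | hψ := ψ.bijective_or_eq_zero
    · exact ((hP hji.symm).false (LinearEquiv.ofBijective ψ hψ)).elim
    · exact congr($hψ x)
  have hsingle : decompose P (φ x) = of (P ·) i (decompose P (φ x) i) := by
    ext j
    obtain rfl | hji := eq_or_ne j i
    · simp
    · rw [hcomponent j hji, of_eq_of_ne _ _ _ hji]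
  rw [← (decompose P).symm_apply_apply (φ x), hsingle, decompose_symm_of]
  exact SetLike.coe_mem _

theorem commute_end_of_apply_mem {K : Type*} [Field K] [IsAlgClosed K] [Algebra K A]
    [Module K V] [IsScalarTower K A V] [FiniteDimensional K V]
    (hP : Pairwise fun i j ↦ IsEmpty (P i ≃ₗ[A] P j))
    (T : V →ₗ[K] V) (hT : ∀ i, ∀ x ∈ P i, T x ∈ P i) (φ : Module.End A V) (v : V) :
    T (φ v) = φ (T v) := by
  induction v using Decomposition.inductionOn P with
  | zero => simp
  | add v w hv hw => simp [hv, hw]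
  | @homogeneous i x =>
    have : FiniteDimensional K (P i) :=
      .of_injective ((P i).subtype.restrictScalars K) Subtype.val_injective
    let φi : Module.End A (P i) :=
      φ.restrict fun x hx ↦ apply_mem_of_pairwise_isEmpty_linearEquiv P hP φ ⟨x, hx⟩
    obtain ⟨c, hc⟩ := (IsSimpleModule.algebraMap_end_bijective_of_isAlgClosed K).2 φi
    have hscalar : ∀ y ∈ P i, φ y = c • y := fun y hy ↦ (congr(($hc ⟨y, hy⟩ : V))).symm
    rw [hscalar x x.2, hscalar _ (hT i x x.2), map_smul]

end Schur

end DirectSum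

namespace Representation

variable {K G V : Type*} [Field K] [Monoid G] [AddCommGroup V] [Module K V]
  (ρ : Representation K G V)

theorem toSubmodule_adjoin_range :
    Subalgebra.toSubmodule (Algebra.adjoin K (Set.range ρ)) = Submodule.span K (Set.range ρ) := by
  rw [Algebra.adjoin_eq_span, MonoidHom.mclosure_range, MonoidHom.coe_mrange]

theorem adjoin_range_apply_mem {q : Submodule K V} (hq : ∀ (g : G) (x : V), x ∈ q → ρ g x ∈ q)
    {a : Module.End K V} (ha : a ∈ Algebra.adjoin K (Set.range ρ)) {x : V} (hx : x ∈ q) :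
    a x ∈ q := by
  induction ha using Algebra.adjoin_induction generalizing x with
  | mem a ha => obtain ⟨g, rfl⟩ := ha; exact hq g x hx
  | algebraMap c => exact q.smul_mem c hx
  | add a b _ _ ha hb => exact q.add_mem (ha hx) (hb hx)
  | mul a b _ _ ha hb => exact ha (hb hx)

def adjoinSubmodule (q : Submodule K V) (hq : ∀ (g : G) (x : V), x ∈ q → ρ g x ∈ q) :
    Submodule (Algebra.adjoin K (Set.range ρ)) V where
  toAddSubmonoid := q.toAddSubmonoid
  smul_mem' a _ hx := ρ.adjoin_range_apply_mem hq a.2 hx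

theorem restrictScalars_adjoinSubmodule (q : Submodule K V)
    (hq : ∀ (g : G) (x : V), x ∈ q → ρ g x ∈ q) :
    (ρ.adjoinSubmodule q hq).restrictScalars K = q := rfl

theorem isSimpleModule_adjoinSubmodule {q : Submodule K V}
    (hq : ∀ (g : G) (x : V), x ∈ q → ρ g x ∈ q) (hbot : q ≠ ⊥)
    (hirr : ∀ q' : Submodule K V, q' ≤ q →
      (∀ (g : G) (x : V), x ∈ q' → ρ g x ∈ q') → q' = ⊥ ∨ q' = q) :
    IsSimpleModule (Algebra.adjoin K (Set.range ρ)) (ρ.adjoinSubmodule q hq) := by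
  refine isSimpleModule_iff_isAtom.mpr ⟨fun h ↦ hbot ?_, fun N hN ↦ ?_⟩
  · rw [← ρ.restrictScalars_adjoinSubmodule q hq, h, Submodule.restrictScalars_bot]
  have hNinv : ∀ (g : G) (x : V), x ∈ N.restrictScalars K → ρ g x ∈ N.restrictScalars K :=
    fun g x hx ↦ N.smul_mem ⟨ρ g, Algebra.subset_adjoin ⟨g, rfl⟩⟩ hx
  obtain h | h := hirr _ (fun x hx ↦ hN.le hx) hNinv
  · exact (Submodule.restrictScalars_eq_bot_iff K _ _).mp h
  · exact (hN.ne (Submodule.restrictScalars_injective K _ _ h)).elim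

theorem isEmpty_linearEquiv_adjoinSubmodule {q q' : Submodule K V}
    (hq : ∀ (g : G) (x : V), x ∈ q → ρ g x ∈ q) (hq' : ∀ (g : G) (x : V), x ∈ q' → ρ g x ∈ q')
    (h : ¬ ∃ f : q ≃ₗ[K] q', ∀ (g : G) (x : q), ((f ⟨ρ g x, hq g x x.2⟩ : q') : V) = ρ g (f x)) :
    IsEmpty (ρ.adjoinSubmodule q hq ≃ₗ[Algebra.adjoin K (Set.range ρ)] ρ.adjoinSubmodule q' hq') :=
  ⟨fun e ↦ h ⟨e.restrictScalars K, fun g x ↦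
    congr(($(e.map_smul ⟨ρ g, Algebra.subset_adjoin ⟨g, rfl⟩⟩ x) : V))⟩⟩

theorem mem_span_range_of_apply_mem [IsAlgClosed K] [FiniteDimensional K V]
    {R : Type*} [DecidableEq R] (p : R → Submodule K V) (hinternal : IsInternal p)
    (hinv : ∀ (r : R) (g : G) (x : V), x ∈ p r → ρ g x ∈ p r)
    (hbot : ∀ r : R, p r ≠ ⊥)
    (hirr : ∀ (r : R) (q : Submodule K V), q ≤ p r →
      (∀ (g : G) (x : V), x ∈ q → ρ g x ∈ q) → q = ⊥ ∨ q = p r)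
    (hni : ∀ r r' : R, r ≠ r' →
      ¬ ∃ f : (p r) ≃ₗ[K] (p r'),
        ∀ (g : G) (x : p r),
          ((f ⟨ρ g (x : V), hinv r g (x : V) x.2⟩ : p r') : V) = ρ g ((f x : p r') : V))
    (T : Module.End K V) (hT : ∀ r, ∀ x ∈ p r, T x ∈ p r) :
    T ∈ Submodule.span K (Set.range ρ) := by
  let P r := ρ.adjoinSubmodule (p r) (hinv r)
  -- `P r` and `p r` have the same elements, so this is the same bijection `⨁ r, p r → V`.
  have hP : IsInternal P := hinternal
  let := hP.chooseDecomposition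
  have (r : R) : IsSimpleModule _ (P r) := ρ.isSimpleModule_adjoinSubmodule _ (hbot r) (hirr r)
  have : IsSemisimpleModule _ V :=
    isSemisimpleModule_of_isSemisimpleModule_submodule' (fun _ ↦ inferInstance)
      hP.submodule_iSup_eq_top
  obtain ⟨a, ha⟩ := exists_smul_eq_of_commute_end T <| commute_end_of_apply_mem P
    (fun r r' hrr' ↦ ρ.isEmpty_linearEquiv_adjoinSubmodule _ _ (hni r r' hrr')) T hT
  rw [← ρ.toSubmodule_adjoin_range, show T = a from LinearMap.ext ha]
  exact a.2

end Representation

/-- The algebraic core of Theorems 1 and 5 of the paper: if a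
finite-dimensional complex representation `(V, ρ)` of a group `G` is a
multiplicity-free internal direct sum of irreducible invariant subspaces
`p r`, and every `ρ(g)` factors as `D ∘ S_g ∘ E` through memory spaces
`M_in` and `M_out`, then `dim M_in · dim M_out ≥ Σ_r (dim p r)²`. -/
theorem memory_dim_lower_bound
    {G : Type*} [Group G] {V : Type*} [AddCommGroup V] [Module ℂ V]
    [FiniteDimensional ℂ V] (ρ : Representation ℂ G V)
    {R : Type*} [Fintype R] [DecidableEq R] (p : R → Submodule ℂ V)
    (hinternal : DirectSum.IsInternal p)
    (hinv : ∀ (r : R) (g : G) (x : V), x ∈ p r → ρ g x ∈ p r)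
    (hbot : ∀ r : R, p r ≠ ⊥)
    (hirr : ∀ (r : R) (q : Submodule ℂ V), q ≤ p r →
      (∀ (g : G) (x : V), x ∈ q → ρ g x ∈ q) → q = ⊥ ∨ q = p r)
    (hni : ∀ r r' : R, r ≠ r' →
      ¬ ∃ f : (p r) ≃ₗ[ℂ] (p r'),
        ∀ (g : G) (x : p r),
          ((f ⟨ρ g (x : V), hinv r g (x : V) x.2⟩ : p r') : V) = ρ g ((f x : p r') : V))
    {Min Mout : Type*} [AddCommGroup Min] [Module ℂ Min] [FiniteDimensional ℂ Min]
    [AddCommGroup Mout] [Module ℂ Mout] [FiniteDimensional ℂ Mout]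
    (E : V →ₗ[ℂ] Min) (D : Mout →ₗ[ℂ] V) (S : G → (Min →ₗ[ℂ] Mout))
    (hfact : ∀ g : G, (ρ g : V →ₗ[ℂ] V) = D ∘ₗ S g ∘ₗ E) :
    Module.finrank ℂ Min * Module.finrank ℂ Mout ≥ ∑ r : R, Module.finrank ℂ (p r) ^ 2 := by
  let := hinternal.chooseDecomposition
  calc ∑ r : R, Module.finrank ℂ (p r) ^ 2
      ≤ Module.finrank ℂ (Submodule.span ℂ (Set.range ρ)) :=
        sum_finrank_sq_le_finrank_of_apply_mem p _
          (ρ.mem_span_range_of_apply_mem p hinternal hinv hbot hirr hni)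
    _ ≤ Module.finrank ℂ Min * Module.finrank ℂ Mout :=
        finrank_span_le_mul_of_forall_eq_comp E D _ (by rintro _ ⟨g, rfl⟩; exact ⟨S g, hfact g⟩)
end

section
/- For all integers d ≥ 2 and n ≥ 0, let d_R := max_{λ ∈ R_{n,d}} d_λ and d_tot := Σ_{λ ∈ R_{n,d}} d_λ. Then ⌈log₂ d_R⌉ + ⌈log₂ d_tot⌉ ≤ (d² − 1) · log₂(n+1) + 2, where the logarithms are real-valued and ⌈·⌉ is the ceiling function. -/
/-- The set of Young diagrams with at most `d` rows and `n` boxes. -/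
def youngSet (n d : ℕ) : Set (Fin d → ℕ) := {l | Antitone l ∧ ∑ i, l i = n}

/-- The Weyl dimension formula (as a real number) for the `SU(d)` irreducible
representation with Young diagram `l`. -/
noncomputable def weylDim (d : ℕ) (l : Fin d → ℕ) : ℝ :=
  (∏ i : Fin d, ∏ j ∈ Finset.Ioi i, (((l i : ℝ) - (l j : ℝ)) + ((j : ℕ) : ℝ) - ((i : ℕ) : ℝ))) /
    (∏ k ∈ Finset.range d, (Nat.factorial k : ℝ))

/-!
Each factor `λᵢ - λⱼ + j - i` of the Weyl numerator lies between `j - i` and `(n + 1) (j - i)`,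
and the product of the `j - i` is the denominator `∏ₖ k!`, so `1 ≤ d_λ ≤ (n + 1) ^ (d choose 2)`.
A Young diagram is determined by its first `d - 1` rows, each at most `n`, so there are at most
`(n + 1) ^ (d - 1)` of them and `d_tot ≤ (n + 1) ^ (d - 1 + d choose 2)`. The two exponents add up
to `d² - 1`, and each ceiling costs at most `1`.
-/

open Finset
open scoped Nat

lemma finsum_mem_le_ncard_nsmul {α M : Type*} [AddCommMonoid M] [PartialOrder M]
    [IsOrderedAddMonoid M] {s : Set α} (hs : s.Finite) {f : α → M} {c : M}
    (h : ∀ x ∈ s, f x ≤ c) : ∑ᶠ x ∈ s, f x ≤ s.ncard • c := by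
  rw [finsum_mem_eq_finite_toFinset_sum f hs, Set.ncard_eq_toFinset_card s hs]
  exact sum_le_card_nsmul _ _ _ fun x hx => h x (hs.mem_toFinset.mp hx)

lemma le_finsum_mem_of_mem {α M : Type*} [AddCommMonoid M] [PartialOrder M]
    [IsOrderedAddMonoid M] {s : Set α} (hs : s.Finite) {f : α → M}
    (hf : ∀ x ∈ s, 0 ≤ f x) {a : α} (ha : a ∈ s) : f a ≤ ∑ᶠ x ∈ s, f x := by
  rw [finsum_mem_eq_finite_toFinset_sum f hs]
  exact single_le_sum (fun x hx => hf x (hs.mem_toFinset.mp hx)) (hs.mem_toFinset.mpr ha)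

lemma Int.ceil_logb_le_of_le_pow {b x y : ℝ} {k : ℕ} (hb : 1 < b) (hx : 0 < x) (hxy : x ≤ y ^ k) :
    (⌈Real.logb b x⌉ : ℝ) ≤ k * Real.logb b y + 1 :=
  calc (⌈Real.logb b x⌉ : ℝ) ≤ Real.logb b x + 1 := (Int.ceil_lt_add_one _).le
    _ ≤ Real.logb b (y ^ k) + 1 := by gcongr
    _ = k * Real.logb b y + 1 := by rw [Real.logb_pow]

variable {n d : ℕ} {l : Fin d → ℕ}

lemma Fin.sum_card_Ioi : ∑ i : Fin d, #(Ioi i) = d.choose 2 := by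
  simp only [Fin.card_Ioi]
  rw [Fin.sum_univ_eq_sum_range (fun k => d - 1 - k), sum_range_reflect (fun k => k),
    sum_range_id, Nat.choose_two_right]

lemma Fin.prod_Iio_sub (j : Fin d) : ∏ i ∈ Iio j, (((j : ℕ) : ℝ) - (i : ℕ)) = (j : ℕ)! := by
  rw [← Nat.descFactorial_self, Nat.descFactorial_eq_prod_range, Nat.cast_prod, ← Nat.Iio_eq_range,
    ← Fin.map_valEmbedding_Iio, prod_map]
  exact prod_congr rfl fun i hi => (Nat.cast_sub (mem_Iio.mp hi).le).symm

lemma Fin.prod_prod_Ioi_sub :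
    ∏ i : Fin d, ∏ j ∈ Ioi i, (((j : ℕ) : ℝ) - (i : ℕ)) = ∏ k ∈ range d, (k ! : ℝ) := by
  rw [prod_comm' (t' := univ) (s' := Iio) (by simp), ← Fin.prod_univ_eq_prod_range]
  exact prod_congr rfl fun j _ => Fin.prod_Iio_sub j

lemma Fin.cast_sub_cast_pos {i j : Fin d} (hij : i < j) : (0 : ℝ) < (j : ℕ) - (i : ℕ) :=
  sub_pos.2 (by exact_mod_cast hij)

lemma le_of_mem_youngSet (hl : l ∈ youngSet n d) (i : Fin d) : l i ≤ n :=
  hl.2 ▸ single_le_sum (fun j _ => Nat.zero_le (l j)) (mem_univ i)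

lemma youngSet_nonempty (hd : 0 < d) : (youngSet n d).Nonempty := by
  classical
  refine ⟨Pi.single ⟨0, hd⟩ n, fun i j hij => ?_, by simp [sum_pi_single']⟩
  by_cases hj : j = ⟨0, hd⟩
  · obtain rfl : i = j := le_antisymm hij (hj ▸ Nat.zero_le i)
    exact le_rfl
  · simp [Pi.single_apply, hj]

lemma youngSet_finite : (youngSet n d).Finite :=
  (Set.Finite.pi fun _ => Set.finite_Iic n).subset fun _ hl i _ => le_of_mem_youngSet hl i

lemma weylFactor_mem_Icc (hl : l ∈ youngSet n d) {i j : Fin d} (hij : i < j) :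
    ((l i : ℝ) - l j) + (j : ℕ) - (i : ℕ) ∈
      Set.Icc (((j : ℕ) : ℝ) - (i : ℕ)) (((n : ℝ) + 1) * (((j : ℕ) : ℝ) - (i : ℕ))) := by
  have hji : ((i : ℕ) : ℝ) + 1 ≤ (j : ℕ) := by exact_mod_cast hij
  have hlij : (l j : ℝ) ≤ l i := by exact_mod_cast hl.1 hij.le
  have hli : (l i : ℝ) ≤ n := by exact_mod_cast le_of_mem_youngSet hl i
  have hlj : (0 : ℝ) ≤ l j := Nat.cast_nonneg _
  constructor <;> nlinarith

lemma one_le_weylDim (hl : l ∈ youngSet n d) : 1 ≤ weylDim d l := by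
  rw [weylDim, one_le_div (prod_pos fun k _ => by positivity), ← Fin.prod_prod_Ioi_sub]
  exact prod_le_prod (fun i _ => prod_nonneg fun j hj => (Fin.cast_sub_cast_pos (mem_Ioi.mp hj)).le)
    fun i _ => prod_le_prod (fun j hj => (Fin.cast_sub_cast_pos (mem_Ioi.mp hj)).le)
      fun j hj => (weylFactor_mem_Icc hl (mem_Ioi.mp hj)).1

lemma weylDim_le_pow (hl : l ∈ youngSet n d) : weylDim d l ≤ ((n : ℝ) + 1) ^ d.choose 2 := by
  have hN : ∏ i : Fin d, ∏ j ∈ Ioi i, ((n : ℝ) + 1) = ((n : ℝ) + 1) ^ d.choose 2 := by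
    simp_rw [prod_const, prod_pow_eq_pow_sum, Fin.sum_card_Ioi]
  have hfactor_nonneg {i j : Fin d} (hij : i < j) :
      0 ≤ ((l i : ℝ) - l j) + (j : ℕ) - (i : ℕ) :=
    (Fin.cast_sub_cast_pos hij).le.trans (weylFactor_mem_Icc hl hij).1
  rw [weylDim, div_le_iff₀ (prod_pos fun k _ => by positivity), ← Fin.prod_prod_Ioi_sub, ← hN]
  simp_rw [← prod_mul_distrib]
  exact prod_le_prod (fun i _ => prod_nonneg fun j hj => hfactor_nonneg (mem_Ioi.mp hj))
    fun i _ => prod_le_prod (fun j hj => hfactor_nonneg (mem_Ioi.mp hj))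
      fun j hj => (weylFactor_mem_Icc hl (mem_Ioi.mp hj)).2

lemma eq_of_mem_youngSet_of_castSucc_eq {m : ℕ} {l l' : Fin (m + 1) → ℕ} (hl : l ∈ youngSet n (m + 1))
    (hl' : l' ∈ youngSet n (m + 1)) (h : ∀ i : Fin m, l i.castSucc = l' i.castSucc) : l = l' := by
  have hlast : l (Fin.last m) = l' (Fin.last m) := by
    have hs := hl.2
    have hs' := hl'.2
    rw [Fin.sum_univ_castSucc, Fintype.sum_congr _ _ h] at hs
    rw [Fin.sum_univ_castSucc] at hs'
    omega
  funext i
  induction i using Fin.lastCases with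
  | last => exact hlast
  | cast i => exact h i

lemma ncard_youngSet_le (m : ℕ) : (youngSet n (m + 1)).ncard ≤ (n + 1) ^ m := by
  classical
  calc (youngSet n (m + 1)).ncard
      ≤ (Fintype.piFinset fun _ : Fin m => range (n + 1) : Set (Fin m → ℕ)).ncard := by
        refine Set.ncard_le_ncard_of_injOn (fun l i => l i.castSucc) (fun l hl => ?_)
          (fun l hl l' hl' h => eq_of_mem_youngSet_of_castSucc_eq hl hl' (congrFun h)) (Set.toFinite _)
        simpa [Nat.lt_succ_iff] using fun i => le_of_mem_youngSet hl _
    _ = (n + 1) ^ m := by rw [Set.ncard_coe_finset, Fintype.card_piFinset]; simp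

lemma one_le_sSup_weylDim (hd : 0 < d) : 1 ≤ sSup (weylDim d '' youngSet n d) := by
  obtain ⟨l, hl⟩ := youngSet_nonempty (n := n) hd
  have hbdd : BddAbove (weylDim d '' youngSet n d) :=
    ⟨_, Set.forall_mem_image.2 fun _ hl => weylDim_le_pow hl⟩
  exact (one_le_weylDim hl).trans (le_csSup hbdd (Set.mem_image_of_mem _ hl))

lemma sSup_weylDim_le : sSup (weylDim d '' youngSet n d) ≤ ((n : ℝ) + 1) ^ d.choose 2 :=
  Real.sSup_le (Set.forall_mem_image.2 fun _ hl => weylDim_le_pow hl) (by positivity)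

lemma one_le_finsum_weylDim (hd : 0 < d) : 1 ≤ ∑ᶠ l ∈ youngSet n d, weylDim d l := by
  obtain ⟨l, hl⟩ := youngSet_nonempty (n := n) hd
  exact (one_le_weylDim hl).trans <| le_finsum_mem_of_mem youngSet_finite
    (fun _ hl' => zero_le_one.trans (one_le_weylDim hl')) hl

lemma finsum_weylDim_le (m : ℕ) :
    ∑ᶠ l ∈ youngSet n (m + 1), weylDim (m + 1) l ≤ ((n : ℝ) + 1) ^ (m + (m + 1).choose 2) :=
  calc ∑ᶠ l ∈ youngSet n (m + 1), weylDim (m + 1) l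
      ≤ (youngSet n (m + 1)).ncard • ((n : ℝ) + 1) ^ (m + 1).choose 2 :=
        finsum_mem_le_ncard_nsmul youngSet_finite fun _ hl => weylDim_le_pow hl
    _ ≤ ((n : ℝ) + 1) ^ m * ((n : ℝ) + 1) ^ (m + 1).choose 2 := by
        rw [nsmul_eq_mul]
        gcongr
        exact_mod_cast ncard_youngSet_le m
    _ = ((n : ℝ) + 1) ^ (m + (m + 1).choose 2) := (pow_add _ _ _).symm

/-- Eq. (32) of the paper (Theorem 2): the communication cost
`c_rm = ⌈log₂ d_R⌉ + ⌈log₂ d_tot⌉` of the representation matching protocol for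
`U_g^{⊗n}`, `g ∈ SU(d)`, is at most `(d²-1)·log₂(n+1) + 2`, where
`d_R = max_λ d_λ` and `d_tot = Σ_λ d_λ` over Young diagrams with at most `d`
rows and `n` boxes. -/
theorem cost_rm_le (d n : ℕ) (hd : 2 ≤ d) :
    (⌈Real.logb 2 (sSup (weylDim d '' youngSet n d))⌉ : ℝ)
        + (⌈Real.logb 2 (∑ᶠ l ∈ youngSet n d, weylDim d l)⌉ : ℝ)
      ≤ ((d : ℝ) ^ 2 - 1) * Real.logb 2 ((n : ℝ) + 1) + 2 := by
  obtain ⟨m, rfl⟩ : ∃ m, d = m + 1 := ⟨d - 1, by omega⟩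
  have hR := Int.ceil_logb_le_of_le_pow one_lt_two
    (zero_lt_one.trans_le (one_le_sSup_weylDim (n := n) m.add_one_pos)) sSup_weylDim_le
  have hT := Int.ceil_logb_le_of_le_pow one_lt_two
    (zero_lt_one.trans_le (one_le_finsum_weylDim (n := n) m.add_one_pos)) (finsum_weylDim_le m)
  have hexp : (((m + 1).choose 2 : ℕ) : ℝ) + ((m + (m + 1).choose 2 : ℕ) : ℝ) =
      ((m + 1 : ℕ) : ℝ) ^ 2 - 1 := by
    push_cast [Nat.cast_choose_two]
    ring
  calc _ ≤ _ := add_le_add hR hT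
    _ = _ := by rw [← hexp]; ring
end

section
/- For every even natural number n, ⌈log₂(n+1)⌉ + ⌈log₂((n+2)²/4)⌉ − ⌈log₂((n+1)(n+2)(n+3)/6)⌉ ≤ 2, where log₂ is the real base-2 logarithm and ⌈·⌉ is the ceiling function (note (n+2)²/4 and (n+1)(n+2)(n+3)/6 are positive integers for even n). -/
/-- Section V of the paper: for even `n`, the overhead
`δc = c_rm - c_min = ⌈log₂(n+1)⌉ + ⌈log₂((n+2)²/4)⌉ - ⌈log₂((n+1)(n+2)(n+3)/6)⌉`
is at most two qubits. -/
theorem overhead_le_two (n : ℕ) (hn : Even n) :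
    ⌈Real.logb 2 ((n : ℝ) + 1)⌉ + ⌈Real.logb 2 (((n : ℝ) + 2) ^ 2 / 4)⌉
        - ⌈Real.logb 2 (((n : ℝ) + 1) * ((n : ℝ) + 2) * ((n : ℝ) + 3) / 6)⌉ ≤ 2 := by
  set a := Real.logb 2 ((n : ℝ) + 1) with ha
  set b := Real.logb 2 (((n : ℝ) + 2) ^ 2 / 4) with hb
  set c := Real.logb 2 (((n : ℝ) + 1) * ((n : ℝ) + 2) * ((n : ℝ) + 3) / 6) with hc
  have hx : (0:ℝ) < (n:ℝ)+1 := by positivity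
  have hy : (0:ℝ) < ((n:ℝ)+2)^2/4 := by positivity
  have hz : (0:ℝ) < ((n:ℝ)+1)*((n:ℝ)+2)*((n:ℝ)+3)/6 := by positivity
  have hsum : a + b = Real.logb 2 (((n:ℝ)+1) * (((n:ℝ)+2)^2/4)) := by
    rw [ha, hb, ← Real.logb_mul (ne_of_gt hx) (ne_of_gt hy)]
  have hle : ((n:ℝ)+1) * (((n:ℝ)+2)^2/4) ≤ 2 * (((n:ℝ)+1)*((n:ℝ)+2)*((n:ℝ)+3)/6) := by
    nlinarith [sq_nonneg ((n:ℝ)), Nat.cast_nonneg (α := ℝ) n]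
  have hlog : a + b ≤ 1 + c := by
    rw [hsum]
    have h1 : Real.logb 2 (((n:ℝ)+1) * (((n:ℝ)+2)^2/4))
        ≤ Real.logb 2 (2 * (((n:ℝ)+1)*((n:ℝ)+2)*((n:ℝ)+3)/6)) :=
      Real.logb_le_logb_of_le (b := 2) (by norm_num) (by positivity) hle
    calc Real.logb 2 (((n:ℝ)+1) * (((n:ℝ)+2)^2/4))
        ≤ Real.logb 2 (2 * (((n:ℝ)+1)*((n:ℝ)+2)*((n:ℝ)+3)/6)) := h1
      _ = 1 + c := by
          rw [Real.logb_mul (by norm_num) (ne_of_gt hz), Real.logb_self_eq_one] <;> norm_num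
  have step1 : ⌈a⌉ + ⌈b⌉ ≤ ⌈a + b⌉ + 1 := by
    have h1 : (⌈a⌉ : ℝ) < a + 1 := Int.ceil_lt_add_one a
    have h2 : (⌈b⌉ : ℝ) < b + 1 := Int.ceil_lt_add_one b
    have h3 : a + b ≤ (⌈a + b⌉ : ℝ) := Int.le_ceil _
    have : (⌈a⌉ + ⌈b⌉ : ℝ) < (⌈a + b⌉ : ℝ) + 2 := by push_cast; linarith
    have h4 : ((⌈a⌉ + ⌈b⌉ : ℤ) : ℝ) < ((⌈a + b⌉ + 2 : ℤ) : ℝ) := by push_cast; linarith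
    have := Int.cast_lt.mp h4
    omega
  have step2 : ⌈a + b⌉ ≤ ⌈(1:ℝ) + c⌉ := Int.ceil_le_ceil hlog
  have step3 : ⌈(1:ℝ) + c⌉ = 1 + ⌈c⌉ := by
    rw [add_comm, Int.ceil_add_one, add_comm]
  omega
end
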